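/- Under the hypotheses of the main theorem together with h3 (for a fixed 0 ≤ p ≤ 1), the Gauss–Newton iterates satisfy ‖x_{k+1} − x*‖ ≤ (t_{k+1}/t_k^{p+1})·‖x_k − x*‖^{p+1} ≤ (t_1/t_0^{p+1})·‖x_k − x*‖^{p+1} for all k, where t_0 = ‖x_0 − x*‖ and t_{k+1} = |t_k − f(t_k)/f'(t_k)|; in particular ‖x_k − x*‖ ≤ t_k for all k. -/

import Mathlib

/-!
The Gauss–Newton step from `x` satisfies `x⁺ - x* = F'(x)† (F'(x)(x - x*) - F x)`. With
`s = ‖x - x*‖`, the majorant condition at `τ = 0` bounds `F'(x)` below by `-f'(s)/β` (a Banach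
perturbation of `F'(x*)`), and along the segment `[x*, x]` it bounds the linearization error by
`(s f'(s) - f(s))/β`. Hence `‖x⁺ - x*‖ ≤ f(s)/f'(s) - s`, the length of one Newton step on the
scalar majorant. This scalar map is monotone and, by h3, so is its quotient by `s^(p+1)`;
comparing with the majorant sequence `t_k` gives `‖x_k - x*‖ ≤ t_k` and the two quotient bounds.
-/

/-- Moore–Penrose inverse of an injective closed-range operator: A† = (A*A)⁻¹ A*. -/
noncomputable def pinv {X Y : Type*} [NormedAddCommGroup X] [InnerProductSpace ℝ X]
    [CompleteSpace X] [NormedAddCommGroup Y] [InnerProductSpace ℝ Y] [CompleteSpace Y]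
    (A : X →L[ℝ] Y) : Y →L[ℝ] X :=
  (Ring.inverse ((ContinuousLinearMap.adjoint A).comp A)).comp (ContinuousLinearMap.adjoint A)

open Set Metric

namespace ContinuousLinearMap

variable {X Y : Type*} [NormedAddCommGroup X] [InnerProductSpace ℝ X]
  [NormedAddCommGroup Y] [InnerProductSpace ℝ Y] {A : X →L[ℝ] Y} {c : ℝ}

lemma one_sub_mul_norm_sub_mul_le {β : ℝ} (hβ : 0 ≤ β) (hA : ∀ u, ‖u‖ ≤ β * ‖A u‖)
    (B : X →L[ℝ] Y) (u : X) : (1 - β * ‖B - A‖) * ‖u‖ ≤ β * ‖B u‖ := by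
  have h : ‖A u‖ ≤ ‖B u‖ + ‖B - A‖ * ‖u‖ := by
    calc ‖A u‖ = ‖B u - (B - A) u‖ := by rw [sub_apply, sub_sub_cancel]
      _ ≤ ‖B u‖ + ‖(B - A) u‖ := norm_sub_le _ _
      _ ≤ ‖B u‖ + ‖B - A‖ * ‖u‖ := by gcongr; exact le_opNorm _ _
  nlinarith [hA u, mul_le_mul_of_nonneg_left h hβ]

variable [CompleteSpace X] [CompleteSpace Y]

lemma inner_adjoint_comp_self_apply (A : X →L[ℝ] Y) (u : X) :
    inner ℝ ((adjoint A ∘L A) u) u = ‖A u‖ ^ 2 := by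
  rw [comp_apply, adjoint_inner_left, real_inner_self_eq_norm_sq]

/-- Lax–Milgram: the Gram operator `A* A` of a bounded-below `A` is coercive. -/
lemma isUnit_adjoint_comp_self (hc : 0 < c) (hA : ∀ u, c * ‖u‖ ≤ ‖A u‖) :
    IsUnit (adjoint A ∘L A) := by
  have hcoercive : IsCoercive (innerSL ℝ ∘L (adjoint A ∘L A)) := by
    refine ⟨c ^ 2, by positivity, fun u => ?_⟩
    rw [comp_apply, innerSL_apply_apply, inner_adjoint_comp_self_apply]
    nlinarith [hA u, mul_nonneg hc.le (norm_nonneg u)]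
  have : adjoint A ∘L A = (hcoercive.continuousLinearEquivOfBilin : X →L[ℝ] X) :=
    ext fun v => ext_inner_right ℝ fun w =>
      (hcoercive.continuousLinearEquivOfBilin_apply v w).symm
  rw [this, isUnit_iff_bijective]
  exact hcoercive.continuousLinearEquivOfBilin.bijective

lemma pinv_apply_apply (hc : 0 < c) (hA : ∀ u, c * ‖u‖ ≤ ‖A u‖) (u : X) :
    pinv A (A u) = u := by
  simpa [pinv] using congr($(Ring.inverse_mul_cancel _ (isUnit_adjoint_comp_self hc hA)) u)

/-- `A (pinv A z)` is the orthogonal projection of `z` onto the range of `A`. -/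
lemma norm_apply_pinv_apply_le (hc : 0 < c) (hA : ∀ u, c * ‖u‖ ≤ ‖A u‖) (z : Y) :
    ‖A (pinv A z)‖ ≤ ‖z‖ := by
  have hgram : (adjoint A ∘L A) (pinv A z) = adjoint A z := by
    simpa [pinv] using
      congr($(Ring.mul_inverse_cancel _ (isUnit_adjoint_comp_self hc hA)) (adjoint A z))
  have hsq : ‖A (pinv A z)‖ ^ 2 ≤ ‖z‖ * ‖A (pinv A z)‖ := by
    rw [← inner_adjoint_comp_self_apply, hgram, adjoint_inner_left]
    exact real_inner_le_norm _ _
  nlinarith [norm_nonneg (A (pinv A z)), norm_nonneg z]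

lemma mul_norm_pinv_apply_le (hc : 0 < c) (hA : ∀ u, c * ‖u‖ ≤ ‖A u‖) (z : Y) :
    c * ‖pinv A z‖ ≤ ‖z‖ :=
  (hA _).trans (norm_apply_pinv_apply_le hc hA z)

lemma mul_norm_sub_pinv_apply_sub_le (hc : 0 < c) (hA : ∀ u, c * ‖u‖ ≤ ‖A u‖) (x y : X)
    (z : Y) : c * ‖y - pinv A z - x‖ ≤ ‖A (y - x) - z‖ := by
  have : y - pinv A z - x = pinv A (A (y - x) - z) := by
    rw [map_sub, pinv_apply_apply hc hA]; abel
  rw [this]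
  exact mul_norm_pinv_apply_le hc hA _

lemma norm_le_norm_pinv_mul (hinj : Function.Injective A) (hclosed : IsClosed (range A))
    (u : X) : ‖u‖ ≤ ‖pinv A‖ * ‖A u‖ := by
  obtain ⟨K, hK⟩ := A.antilipschitz_of_injective_of_isClosed_range hinj hclosed
  have hc : (0 : ℝ) < (K + 1 : NNReal)⁻¹ := by positivity
  have hA : ∀ v, ((K + 1 : NNReal) : ℝ)⁻¹ * ‖v‖ ≤ ‖A v‖ := fun v => by
    rw [inv_mul_le_iff₀ (by positivity)]
    exact (A.bound_of_antilipschitz hK v).trans (by gcongr; simp)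
  calc ‖u‖ = ‖pinv A (A u)‖ := by rw [pinv_apply_apply hc hA]
    _ ≤ ‖pinv A‖ * ‖A u‖ := le_opNorm _ _

end ContinuousLinearMap

lemma Real.exists_mem_lt_of_lt_sSup {S : Set ℝ} {b : ℝ} (hb : 0 ≤ b) (h : b < sSup S) :
    ∃ a ∈ S, b < a :=
  exists_lt_of_lt_csSup (nonempty_iff_ne_empty.2 fun hS => by simp [hS] at h; linarith) h

lemma ball_sSup_subset {X : Type*} [PseudoMetricSpace X] {x : X} {S : Set ℝ} {Ω : Set X}
    (hS : ∀ t ∈ S, ball x t ⊆ Ω) : ball x (sSup S) ⊆ Ω := fun _ hy =>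
  let ⟨t, ht, hyt⟩ := Real.exists_mem_lt_of_lt_sSup dist_nonneg hy
  hS t ht hyt

section RatioMonotone

variable {g : ℝ → ℝ} {ν q : ℝ}

lemma div_rpow_mul_rpow_self (hg0 : g 0 = 0) {a : ℝ} (ha : 0 ≤ a) : g a / a ^ q * a ^ q = g a := by
  rcases ha.eq_or_lt with rfl | ha0
  · simp [hg0]
  · exact div_mul_cancel₀ _ (Real.rpow_pos_of_pos ha0 q).ne'

lemma monotoneOn_div_rpow_Ico (hg0 : g 0 = 0) (hg : ∀ t ∈ Ico 0 ν, 0 ≤ g t)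
    (h : MonotoneOn (fun t => g t / t ^ q) (Ioo 0 ν)) :
    MonotoneOn (fun t => g t / t ^ q) (Ico 0 ν) := by
  intro a ha b hb hab
  rcases ha.1.eq_or_lt with rfl | ha0
  · simp only [hg0, zero_div]
    exact div_nonneg (hg b hb) (Real.rpow_nonneg hb.1 q)
  · exact h ⟨ha0, ha.2⟩ ⟨ha0.trans_le hab, hb.2⟩ hab

lemma le_div_rpow_mul_rpow (hg0 : g 0 = 0) (hg : ∀ t ∈ Ico 0 ν, 0 ≤ g t)
    (h : MonotoneOn (fun t => g t / t ^ q) (Ioo 0 ν)) {a b : ℝ} (ha : a ∈ Ico 0 ν)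
    (hb : b ∈ Ico 0 ν) (hab : a ≤ b) : g a ≤ g b / b ^ q * a ^ q := by
  rw [← div_rpow_mul_rpow_self hg0 ha.1]
  gcongr ?_ * _
  · exact Real.rpow_nonneg ha.1 q
  · exact monotoneOn_div_rpow_Ico hg0 hg h ha hb hab

lemma monotoneOn_of_monotoneOn_div_rpow (hq : 0 ≤ q) (hg0 : g 0 = 0) (hg : ∀ t ∈ Ico 0 ν, 0 ≤ g t)
    (h : MonotoneOn (fun t => g t / t ^ q) (Ioo 0 ν)) : MonotoneOn g (Ico 0 ν) :=
  fun a ha b hb hab =>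
  calc g a ≤ g b / b ^ q * a ^ q := le_div_rpow_mul_rpow hg0 hg h ha hb hab
    _ ≤ g b / b ^ q * b ^ q := by
      gcongr
      · exact div_nonneg (hg b hb) (Real.rpow_nonneg hb.1 q)
      · exact ha.1
    _ = g b := div_rpow_mul_rpow_self hg0 hb.1

end RatioMonotone

theorem MonotoneOn.seq_le_seq_of_mem_Icc {α : Type*} [Preorder α] {e : α → α} {b c : α}
    (he : MonotoneOn e (Icc b c)) {a t : ℕ → α} (ha : ∀ k, b ≤ a k) (ht : ∀ k, t k ∈ Icc b c)
    (h₀ : a 0 ≤ t 0) (ha_succ : ∀ k, a k ≤ c → a (k + 1) ≤ e (a k))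
    (ht_succ : ∀ k, t (k + 1) = e (t k)) : ∀ k, a k ≤ t k
  | 0 => h₀
  | k + 1 => by
    have ih := he.seq_le_seq_of_mem_Icc ha ht h₀ ha_succ ht_succ k
    have hac := ih.trans (ht k).2
    rw [ht_succ]
    exact (ha_succ k hac).trans (he ⟨ha k, hac⟩ (ht k) ih)

/-- The Newton step `t - f t / f' t` of the majorant with its sign flipped: for a majorant it is
nonnegative wherever `f' < 0`. -/
noncomputable def newtonError (f fp : ℝ → ℝ) (t : ℝ) : ℝ := f t / fp t - t

lemma mem_Icc_and_eq_newtonError {f fp : ℝ → ℝ} {t : ℕ → ℝ}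
    (he : ∀ s ∈ Icc 0 (t 0), newtonError f fp s ∈ Icc 0 s)
    (htrec : ∀ k, t (k + 1) = |t k - f (t k) / fp (t k)|) (h₀ : 0 ≤ t 0) :
    ∀ k, t k ∈ Icc 0 (t 0) ∧ t (k + 1) = newtonError f fp (t k) := by
  have habs : ∀ s ∈ Icc 0 (t 0), |s - f s / fp s| = newtonError f fp s := fun s hs => by
    rw [abs_sub_comm]
    exact abs_of_nonneg (he s hs).1
  have ht : ∀ k, t k ∈ Icc 0 (t 0) := by
    intro k
    induction k with
    | zero => exact ⟨h₀, le_rfl⟩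
    | succ k ih =>
      rw [htrec, habs _ ih]
      exact ⟨(he _ ih).1, (he _ ih).2.trans ih.2⟩
  exact fun k => ⟨ht k, (htrec k).trans (habs _ (ht k))⟩

section Majorant

variable {f fp : ℝ → ℝ} {R : ℝ}

lemma hasDerivWithinAt_Ici_of_Ico (hderiv : ∀ t ∈ Ico 0 R, HasDerivWithinAt f (fp t) (Ico 0 R) t)
    {t : ℝ} (ht : t ∈ Ico 0 R) : HasDerivWithinAt f (fp t) (Ici t) t :=
  (hderiv t ht).mono_of_mem_nhdsWithin
    (Filter.mem_of_superset (Ico_mem_nhdsGE ht.2) (Ico_subset_Ico_left ht.1))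

lemma hasDerivWithinAt_comp_mul_const_Ici
    (hderiv : ∀ t ∈ Ico 0 R, HasDerivWithinAt f (fp t) (Ico 0 R) t) {s τ : ℝ} (hs : 0 ≤ s)
    (hτs : τ * s ∈ Ico 0 R) :
    HasDerivWithinAt (fun σ => f (σ * s)) (fp (τ * s) * s) (Ici τ) τ :=
  (hasDerivWithinAt_Ici_of_Ico hderiv hτs).comp τ (hasDerivAt_mul_const s).hasDerivWithinAt
    fun _ hσ => mul_le_mul_of_nonneg_right (mem_Ici.1 hσ) hs

lemma sub_le_mul_of_monotoneOn (hderiv : ∀ t ∈ Ico 0 R, HasDerivWithinAt f (fp t) (Ico 0 R) t)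
    (hmono : MonotoneOn fp (Ico 0 R)) {a b : ℝ} (ha : 0 ≤ a) (hab : a ≤ b) (hb : b < R) :
    f b - f a ≤ (b - a) * fp b := by
  have hsub : Icc a b ⊆ Ico 0 R := Icc_subset_Ico ha hb
  have hg : MonotoneOn (fun u => u * fp b - f u) (Icc a b) := by
    refine monotoneOn_of_hasDerivWithinAt_nonneg (f' := fun u => fp b - fp u) (convex_Icc a b)
      (continuousOn_id.mul continuousOn_const |>.sub
        fun u hu => ((hderiv u (hsub hu)).continuousWithinAt.mono hsub))
      (fun u hu => ?_) (fun u hu => ?_)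
    · rw [interior_Icc] at hu ⊢
      exact (hasDerivAt_mul_const (fp b)).hasDerivWithinAt.sub
        ((hderiv u (hsub (Ioo_subset_Icc_self hu))).mono (Ioo_subset_Icc_self.trans hsub))
    · rw [interior_Icc] at hu
      exact sub_nonneg.2 (hmono (hsub (Ioo_subset_Icc_self hu)) (hsub (right_mem_Icc.2 hab))
        hu.2.le)
  have := hg (left_mem_Icc.2 hab) (right_mem_Icc.2 hab) hab
  simp only at this
  linarith

lemma newtonError_nonneg (hderiv : ∀ t ∈ Ico 0 R, HasDerivWithinAt f (fp t) (Ico 0 R) t)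
    (hmono : MonotoneOn fp (Ico 0 R)) (hf0 : f 0 = 0) {s : ℝ} (hs : 0 ≤ s) (hsR : s < R)
    (hfps : fp s < 0) : 0 ≤ newtonError f fp s := by
  have := sub_le_mul_of_monotoneOn hderiv hmono le_rfl hs hsR
  rw [newtonError, sub_nonneg, le_div_iff_of_neg hfps]
  linarith

lemma lt_and_deriv_neg_of_lt_sSup (hmono : StrictMonoOn fp (Ico 0 R)) {s : ℝ} (hs : 0 ≤ s)
    (hsν : s < sSup {t ∈ Ico 0 R | fp t < 0}) : s < R ∧ fp s < 0 := by
  obtain ⟨u, ⟨hu, hfpu⟩, hsu⟩ := Real.exists_mem_lt_of_lt_sSup hs hsν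
  exact ⟨hsu.trans hu.2, (hmono ⟨hs, hsu.trans hu.2⟩ hu hsu).trans hfpu⟩

lemma lt_and_newtonError_le_of_lt_sSup (hf0 : f 0 = 0) {ν s : ℝ} (hs : 0 ≤ s)
    (hsρ : s < sSup {δ | δ ∈ Ioo 0 ν ∧ ∀ t ∈ Ioo 0 δ, newtonError f fp t / t < 1}) :
    s < ν ∧ newtonError f fp s ≤ s := by
  obtain ⟨δ, ⟨hδ, hδe⟩, hsδ⟩ := Real.exists_mem_lt_of_lt_sSup hs hsρ
  refine ⟨hsδ.trans hδ.2, ?_⟩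
  rcases hs.eq_or_lt with rfl | hs0
  · simp [newtonError, hf0]
  · exact ((div_lt_one hs0).1 (hδe s ⟨hs0, hsδ⟩)).le

variable {X Y : Type*} [NormedAddCommGroup X] [NormedSpace ℝ X] [NormedAddCommGroup Y]
  [NormedSpace ℝ Y]

/-- Compare `τ ↦ F (x + τ (y - x)) - τ F'(y)(y - x)` with the scalar model
`τ ↦ τ s f'(s) - f (τ s)` through the fencing theorem. -/
theorem mul_norm_taylor_remainder_le {F : X → Y} {Fp : X → X →L[ℝ] Y} {x y : X} {β : ℝ}
    (hβ : 0 < β)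
    (hF : ∀ τ ∈ Icc (0 : ℝ) 1, HasFDerivAt F (Fp (x + τ • (y - x))) (x + τ • (y - x)))
    (hderiv : ∀ t ∈ Ico 0 R, HasDerivWithinAt f (fp t) (Ico 0 R) t) (hyR : ‖y - x‖ < R)
    (hmaj : ∀ τ ∈ Icc (0 : ℝ) 1,
      β * ‖Fp y - Fp (x + τ • (y - x))‖ ≤ fp ‖y - x‖ - fp (τ * ‖y - x‖)) :
    β * ‖F y - F x - Fp y (y - x)‖ ≤ ‖y - x‖ * fp ‖y - x‖ - (f ‖y - x‖ - f 0) := by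
  set s := ‖y - x‖
  set d := y - x with hd
  have hs : 0 ≤ s := norm_nonneg d
  have hτs : ∀ τ ∈ Icc (0 : ℝ) 1, τ * s ∈ Ico 0 R := fun τ hτ =>
    ⟨mul_nonneg hτ.1 hs, (mul_le_of_le_one_left hs hτ.2).trans_lt hyR⟩
  have hg : ∀ τ ∈ Icc (0 : ℝ) 1, HasDerivAt (fun σ : ℝ => F (x + σ • d) - F x - σ • Fp y d)
      (Fp (x + τ • d) d - Fp y d) τ := fun τ hτ => by
    have hline : HasDerivAt (fun σ : ℝ => x + σ • d) d τ := by
      simpa using ((hasDerivAt_id τ).smul_const d).const_add x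
    exact ((((hF τ hτ).comp_hasDerivAt τ hline).sub_const (F x)).sub
      ((hasDerivAt_id τ).smul_const (Fp y d))).congr_deriv (by simp)
  set φ : ℝ → ℝ := fun σ => (σ * (s * fp s) - (f (σ * s) - f 0)) / β
  have hφ' : ∀ τ ∈ Ico (0 : ℝ) 1,
      HasDerivWithinAt φ ((s * fp s - fp (τ * s) * s) / β) (Ici τ) τ := fun τ hτ =>
    ((hasDerivAt_mul_const _).hasDerivWithinAt.sub
      ((hasDerivWithinAt_comp_mul_const_Ici hderiv hs (hτs τ (Ico_subset_Icc_self hτ))).sub_const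
        (f 0))).div_const β
  have hfcont : ContinuousOn f (Ico 0 R) := fun t ht => (hderiv t ht).continuousWithinAt
  have hφcont : ContinuousOn φ (Icc 0 1) :=
    ((continuousOn_id.mul continuousOn_const).sub ((hfcont.comp
      (continuousOn_id.mul continuousOn_const) hτs).sub continuousOn_const)).div_const β
  have hbound : ∀ τ ∈ Ico (0 : ℝ) 1,
      ‖Fp (x + τ • d) d - Fp y d‖ ≤ (s * fp s - fp (τ * s) * s) / β := fun τ hτ => by
    rw [le_div_iff₀ hβ, norm_sub_rev, ← sub_apply]
    calc ‖(Fp y - Fp (x + τ • d)) d‖ * β ≤ (β * ‖Fp y - Fp (x + τ • d)‖) * s := by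
          nlinarith [(Fp y - Fp (x + τ • d)).le_opNorm d]
      _ ≤ (fp s - fp (τ * s)) * s := by gcongr; exact hmaj τ (Ico_subset_Icc_self hτ)
      _ = s * fp s - fp (τ * s) * s := by ring
  have key := image_norm_le_of_norm_deriv_right_le_deriv_boundary'
    (fun τ hτ => (hg τ hτ).continuousAt.continuousWithinAt)
    (fun τ hτ => (hg τ (Ico_subset_Icc_self hτ)).hasDerivWithinAt) (by simp [φ]) hφcont hφ' hbound
    (right_mem_Icc.2 zero_le_one)
  rw [le_div_iff₀ hβ] at key
  simpa [φ, hd, mul_comm β] using key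

end Majorant

section GaussNewton

variable {X Y : Type*} [NormedAddCommGroup X] [InnerProductSpace ℝ X] [CompleteSpace X]
  [NormedAddCommGroup Y] [InnerProductSpace ℝ Y] [CompleteSpace Y]

theorem norm_gaussNewton_sub_le {f fp : ℝ → ℝ} {R κ : ℝ} {F : X → Y} {Fp : X → X →L[ℝ] Y}
    {xs y : X} {β : ℝ} (hβ : 0 < β) (hbelow : ∀ u, ‖u‖ ≤ β * ‖Fp xs u‖) (hFxs : F xs = 0)
    (hF : ∀ z ∈ ball xs κ, HasFDerivAt F (Fp z) z)
    (hderiv : ∀ t ∈ Ico 0 R, HasDerivWithinAt f (fp t) (Ico 0 R) t) (hf0 : f 0 = 0)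
    (hfp0 : fp 0 = -1)
    (hmaj : ∀ τ ∈ Icc (0 : ℝ) 1, ∀ x ∈ ball xs κ,
      β * ‖Fp x - Fp (xs + τ • (x - xs))‖ ≤ fp ‖x - xs‖ - fp (τ * ‖x - xs‖))
    (hy : y ∈ ball xs κ) (hyR : ‖y - xs‖ < R) (hfpy : fp ‖y - xs‖ < 0) :
    ‖y - pinv (Fp y) (F y) - xs‖ ≤ newtonError f fp ‖y - xs‖ := by
  have hseg : ∀ τ ∈ Icc (0 : ℝ) 1, xs + τ • (y - xs) ∈ ball xs κ := fun τ hτ =>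
    (convex_ball xs κ).add_smul_sub_mem (mem_ball_self (pos_of_mem_ball hy)) hy hτ
  replace hmaj := fun τ hτ => hmaj τ hτ y hy
  set s := ‖y - xs‖
  have hβA : β * ‖Fp y - Fp xs‖ ≤ fp s + 1 := by
    simpa [hfp0] using hmaj 0 (left_mem_Icc.2 zero_le_one)
  have hlow : ∀ u, -fp s / β * ‖u‖ ≤ ‖Fp y u‖ := fun u => by
    rw [div_mul_eq_mul_div, div_le_iff₀ hβ, mul_comm ‖Fp y u‖]
    calc -fp s * ‖u‖ ≤ (1 - β * ‖Fp y - Fp xs‖) * ‖u‖ := by gcongr; linarith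
      _ ≤ β * ‖Fp y u‖ := ContinuousLinearMap.one_sub_mul_norm_sub_mul_le hβ.le hbelow _ u
  have hstep := ContinuousLinearMap.mul_norm_sub_pinv_apply_sub_le (div_pos (neg_pos.2 hfpy) hβ)
    hlow xs y (F y)
  have htaylor := mul_norm_taylor_remainder_le hβ (fun τ hτ => hF _ (hseg τ hτ)) hderiv hyR hmaj
  rw [hFxs, sub_zero, hf0, sub_zero, norm_sub_rev] at htaylor
  have hN : -fp s * ‖y - pinv (Fp y) (F y) - xs‖ ≤ s * fp s - f s := by
    have := mul_le_mul_of_nonneg_left hstep hβ.le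
    rw [← mul_assoc, mul_div_cancel₀ _ hβ.ne'] at this
    linarith
  rw [newtonError, le_sub_iff_add_le, le_div_iff_of_neg hfpy]
  linarith

end GaussNewton

theorem stmt15_general
    {X Y : Type*} [NormedAddCommGroup X] [InnerProductSpace ℝ X] [CompleteSpace X]
    [NormedAddCommGroup Y] [InnerProductSpace ℝ Y] [CompleteSpace Y]
    (Ω : Set X) (F : X → Y) (Fp : X → X →L[ℝ] Y)
    (hF : ∀ x ∈ Ω, HasFDerivAt F (Fp x) x)
    (hclosed : ∀ x ∈ Ω, IsClosed (Set.range ((Fp x) : X → Y)))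
    (xs : X) (hxs : xs ∈ Ω) (hFxs : F xs = 0) (hinj : Function.Injective ((Fp xs) : X → Y))
    (R : ℝ)
    (β κ : ℝ) (hβ : β = ‖pinv (Fp xs)‖)
    (hκ : κ = sSup {t ∈ Set.Ico 0 R | Metric.ball xs t ⊆ Ω})
    (f fp : ℝ → ℝ)
    (hderiv : ∀ t ∈ Set.Ico (0:ℝ) R, HasDerivWithinAt f (fp t) (Set.Ico 0 R) t)
    (hmaj : ∀ τ ∈ Set.Icc (0:ℝ) 1, ∀ x ∈ Metric.ball xs κ,
      β * ‖Fp x - Fp (xs + τ • (x - xs))‖ ≤ fp ‖x - xs‖ - fp (τ * ‖x - xs‖))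
    (hf0 : f 0 = 0) (hfp0 : fp 0 = -1) (hmono : StrictMonoOn fp (Set.Ico 0 R))
    (ν ρ r : ℝ) (hν : ν = sSup {t ∈ Set.Ico 0 R | fp t < 0})
    (hρ : ρ = sSup {δ : ℝ | δ ∈ Set.Ioo 0 ν ∧ ∀ t ∈ Set.Ioo 0 δ, (f t / fp t - t) / t < 1})
    (hr : r = min κ ρ)
    (p : ℝ) (hp0 : 0 ≤ p)
    (h3 : StrictMonoOn (fun t => (f t / fp t - t) / t ^ (p + 1)) (Set.Ioo 0 ν))
    (x : ℕ → X) (hx0 : x 0 ∈ Metric.ball xs r) (hx0ne : x 0 ≠ xs)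
    (hxrec : ∀ k, x (k + 1) = x k - pinv (Fp (x k)) (F (x k)))
    (t : ℕ → ℝ) (ht0 : t 0 = ‖x 0 - xs‖)
    (htrec : ∀ k, t (k + 1) = |t k - f (t k) / fp (t k)|) :
    (∀ k, ‖x k - xs‖ ≤ t k) ∧
      ∀ k, ‖x (k + 1) - xs‖ ≤ (t (k + 1) / t k ^ (p + 1)) * ‖x k - xs‖ ^ (p + 1) ∧
        (t (k + 1) / t k ^ (p + 1)) * ‖x k - xs‖ ^ (p + 1) ≤
          (t 1 / t 0 ^ (p + 1)) * ‖x k - xs‖ ^ (p + 1) := by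
  have hrν : ∀ s, 0 ≤ s → s < r → s < ν ∧ newtonError f fp s ≤ s := fun s hs hsr =>
    lt_and_newtonError_le_of_lt_sSup hf0 hs (hρ ▸ hsr.trans_le (hr ▸ min_le_right _ _))
  have hνR : ∀ s ∈ Ico 0 ν, s < R ∧ fp s < 0 := fun s hs =>
    lt_and_deriv_neg_of_lt_sSup hmono hs.1 (hν ▸ hs.2)
  have he_nonneg : ∀ s ∈ Ico 0 ν, 0 ≤ newtonError f fp s := fun s hs =>
    newtonError_nonneg hderiv hmono.monotoneOn hf0 hs.1 (hνR s hs).1 (hνR s hs).2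
  have hbelow : ∀ u, ‖u‖ ≤ β * ‖Fp xs u‖ :=
    hβ ▸ ContinuousLinearMap.norm_le_norm_pinv_mul hinj (hclosed xs hxs)
  have hβpos : 0 < β := pos_of_mul_pos_left
    ((norm_pos_iff.2 (sub_ne_zero.2 hx0ne)).trans_le (hbelow _)) (norm_nonneg _)
  have hκball : ball xs κ ⊆ Ω := hκ ▸ ball_sSup_subset fun _ ht => ht.2
  have hstep : ∀ y, ‖y - xs‖ < r →
      ‖y - pinv (Fp y) (F y) - xs‖ ≤ newtonError f fp ‖y - xs‖ := fun y hy => by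
    obtain ⟨hyR, hfpy⟩ := hνR _ ⟨norm_nonneg _, (hrν _ (norm_nonneg _) hy).1⟩
    exact norm_gaussNewton_sub_le hβpos hbelow hFxs
      (fun z hz => hF z (hκball hz)) hderiv hf0 hfp0 hmaj
      (mem_ball_iff_norm.2 (hy.trans_le (hr ▸ min_le_left _ _))) hyR hfpy
  have ht0r : t 0 < r := ht0 ▸ mem_ball_iff_norm.1 hx0
  have hIcc : Icc 0 (t 0) ⊆ Ico 0 ν := fun s hs => ⟨hs.1, (hrν s hs.1 (hs.2.trans_lt ht0r)).1⟩
  obtain ⟨ht, ht_succ⟩ := forall_and.1 <| mem_Icc_and_eq_newtonError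
    (fun s hs => ⟨he_nonneg s (hIcc hs), (hrν s hs.1 (hs.2.trans_lt ht0r)).2⟩) htrec
    (ht0 ▸ norm_nonneg _)
  have he0 : newtonError f fp 0 = 0 := by simp [newtonError, hf0]
  have hx : ∀ k, ‖x k - xs‖ ≤ t k :=
    ((monotoneOn_of_monotoneOn_div_rpow (by linarith) he0 he_nonneg h3.monotoneOn).mono
      hIcc).seq_le_seq_of_mem_Icc (fun _ => norm_nonneg _) ht ht0.ge
      (fun k hk => hxrec k ▸ hstep _ (hk.trans_lt ht0r)) ht_succ
  have hxI : ∀ k, ‖x k - xs‖ ∈ Icc 0 (t 0) := fun k => ⟨norm_nonneg _, (hx k).trans (ht k).2⟩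
  refine ⟨hx, fun k => ⟨?_, ?_⟩⟩
  · rw [hxrec, ht_succ]
    exact (hstep _ ((hxI k).2.trans_lt ht0r)).trans
      (le_div_rpow_mul_rpow he0 he_nonneg h3.monotoneOn (hIcc (hxI k)) (hIcc (ht k)) (hx k))
  · rw [ht_succ, ht_succ 0]
    gcongr ?_ * _
    exact monotoneOn_div_rpow_Ico he0 he_nonneg h3.monotoneOn (hIcc (ht k)) (hIcc (ht 0))
      (ht k).2

theorem stmt15
    {X Y : Type*} [NormedAddCommGroup X] [InnerProductSpace ℝ X] [CompleteSpace X]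
    [NormedAddCommGroup Y] [InnerProductSpace ℝ Y] [CompleteSpace Y]
    (Ω : Set X) (hΩ : IsOpen Ω) (F : X → Y) (Fp : X → X →L[ℝ] Y)
    (hF : ∀ x ∈ Ω, HasFDerivAt F (Fp x) x)
    (hclosed : ∀ x ∈ Ω, IsClosed (Set.range ((Fp x) : X → Y)))
    (xs : X) (hxs : xs ∈ Ω) (hFxs : F xs = 0) (hinj : Function.Injective ((Fp xs) : X → Y))
    (R : ℝ) (hR : 0 < R)
    (β κ : ℝ) (hβ : β = ‖pinv (Fp xs)‖)
    (hκ : κ = sSup {t ∈ Set.Ico 0 R | Metric.ball xs t ⊆ Ω})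
    (f fp : ℝ → ℝ)
    (hderiv : ∀ t ∈ Set.Ico (0:ℝ) R, HasDerivWithinAt f (fp t) (Set.Ico 0 R) t)
    (hcont : ContinuousOn fp (Set.Ico 0 R))
    (hmaj : ∀ τ ∈ Set.Icc (0:ℝ) 1, ∀ x ∈ Metric.ball xs κ,
      β * ‖Fp x - Fp (xs + τ • (x - xs))‖ ≤ fp ‖x - xs‖ - fp (τ * ‖x - xs‖))
    (hf0 : f 0 = 0) (hfp0 : fp 0 = -1) (hmono : StrictMonoOn fp (Set.Ico 0 R))
    (ν ρ r : ℝ) (hν : ν = sSup {t ∈ Set.Ico 0 R | fp t < 0})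
    (hρ : ρ = sSup {δ : ℝ | δ ∈ Set.Ioo 0 ν ∧ ∀ t ∈ Set.Ioo 0 δ, (f t / fp t - t) / t < 1})
    (hr : r = min κ ρ)
    (p : ℝ) (hp0 : 0 ≤ p) (hp1 : p ≤ 1)
    (h3 : StrictMonoOn (fun t => (f t / fp t - t) / t ^ (p + 1)) (Set.Ioo 0 ν))
    (x : ℕ → X) (hx0 : x 0 ∈ Metric.ball xs r) (hx0ne : x 0 ≠ xs)
    (hxrec : ∀ k, x (k + 1) = x k - pinv (Fp (x k)) (F (x k)))
    (t : ℕ → ℝ) (ht0 : t 0 = ‖x 0 - xs‖)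
    (htrec : ∀ k, t (k + 1) = |t k - f (t k) / fp (t k)|) :
    (∀ k, ‖x k - xs‖ ≤ t k) ∧
      ∀ k, ‖x (k + 1) - xs‖ ≤ (t (k + 1) / t k ^ (p + 1)) * ‖x k - xs‖ ^ (p + 1) ∧
        (t (k + 1) / t k ^ (p + 1)) * ‖x k - xs‖ ^ (p + 1) ≤
          (t 1 / t 0 ^ (p + 1)) * ‖x k - xs‖ ^ (p + 1) :=
  stmt15_general Ω F Fp hF hclosed xs hxs hFxs hinj R β κ hβ hκ f fp hderiv hmaj hf0 hfp0 hmono ν ρ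
    r hν hρ hr p hp0 h3 x hx0 hx0ne hxrec t ht0 htrec
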